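/- Let dμ be a measure on ℝ with compact infinite support and let (a,b) be an open interval disjoint from supp(dμ). Then for each n, the orthonormal polynomial p_n has at most one zero in (a,b); moreover if a = −∞ or b = +∞ (i.e., the interval is unbounded), p_n has no zeros in (a,b). -/

import Mathlib

/-!
If `p n = r * q` with `deg q < n` and `r ≥ 0` on the support of `μ`, then orthogonality gives
`∫ p n * q = 0`, while `p n * q = r * q ^ 2 ≥ 0`; so `r * q ^ 2` vanishes `μ`-a.e., hence so does
`(p n) ^ 2 = r * (r * q ^ 2)`, contradicting `∫ (p n) ^ 2 = 1`. Two zeros `x₁ < x₂` of `p n` in a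
gap of the support yield such a factorisation with `r = (X - x₁) * (X - x₂)`, and a zero `x` to
the left (right) of the support one with `r = X - x` (resp. `x - X`).
-/

open MeasureTheory Polynomial

def measSupport (μ : Measure ℝ) : Set ℝ :=
  {x | ∀ ε > 0, 0 < μ (Metric.ball x ε)}

lemma measSupport_eq_support (μ : Measure ℝ) : measSupport μ = μ.support := by
  ext x
  exact (Metric.nhds_basis_ball.mem_measureSupport).symm

lemma ae_notMem_of_inter_measSupport_eq_empty {μ : Measure ℝ} {s : Set ℝ}
    (h : s ∩ measSupport μ = ∅) : ∀ᵐ x ∂μ, x ∉ s := by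
  filter_upwards [Measure.support_mem_ae (μ := μ)] with x hx hxs
  exact h.subset ⟨hxs, (measSupport_eq_support μ).symm ▸ hx⟩

lemma integrable_eval_of_integrable_abs_pow {μ : Measure ℝ}
    (hmom : ∀ n : ℕ, Integrable (fun x : ℝ => |x| ^ n) μ) (q : ℝ[X]) :
    Integrable (fun x => q.eval x) μ := by
  simp_rw [eval_eq_sum_range]
  refine integrable_finsetSum _ fun i _ => ((hmom i).const_mul |q.coeff i|).mono'
    (by fun_prop) (Filter.Eventually.of_forall fun x => ?_)
  simp

lemma X_sub_C_mul_X_sub_C_dvd {K : Type*} [Field K] {f : K[X]} {a b : K} (hab : a ≠ b)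
    (ha : f.IsRoot a) (hb : f.IsRoot b) : (X - C a) * (X - C b) ∣ f :=
  (isCoprime_X_sub_C_of_isUnit_sub (sub_ne_zero.mpr hab).isUnit).mul_dvd
    (dvd_iff_isRoot.mpr ha) (dvd_iff_isRoot.mpr hb)

lemma ne_zero_of_integral_eval_mul_self_eq_one {μ : Measure ℝ} {f : ℝ[X]}
    (h : ∫ x, f.eval x * f.eval x ∂μ = 1) : f ≠ 0 := by
  rintro rfl
  simp at h

section Orthonormal

variable {μ : Measure ℝ} {p : ℕ → ℝ[X]}
  (hmom : ∀ n : ℕ, Integrable (fun x : ℝ => |x| ^ n) μ)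
  (hdeg : ∀ k, (p k).natDegree = k)
  (horth : ∀ k m, ∫ x, (p k).eval x * (p m).eval x ∂μ = if k = m then 1 else 0)
include hmom hdeg horth

theorem integral_eval_mul_eq_zero_of_degree_lt {n : ℕ} {q : ℝ[X]} (hq : q.degree < n) :
    ∫ x, (p n).eval x * q.eval x ∂μ = 0 := by
  have hp0 (k : ℕ) : p k ≠ 0 :=
    ne_zero_of_integral_eval_mul_self_eq_one ((horth k k).trans (if_pos rfl))
  let S : Sequence ℝ := ⟨p, fun k => (degree_eq_iff_natDegree_eq (hp0 k)).mpr (hdeg k)⟩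
  have hspan : q ∈ Submodule.span ℝ (p '' Set.Iio n) := by
    rw [show p = ⇑S from rfl, S.span_degreeLT fun i _ => (leadingCoeff_ne_zero.mpr (hp0 i)).isUnit]
    exact mem_degreeLT.mpr hq
  clear hq
  have hint (r : ℝ[X]) : Integrable (fun x => (p n).eval x * r.eval x) μ := by
    simpa using integrable_eval_of_integrable_abs_pow hmom (p n * r)
  induction hspan using Submodule.span_induction with
  | mem _ hr => obtain ⟨k, hk, rfl⟩ := hr; simp [horth, (Set.mem_Iio.mp hk).ne']
  | zero => simp
  | add r s _ _ hr hs => simp [mul_add, integral_add (hint r) (hint s), hr, hs]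
  | smul c r _ hr => simp [mul_left_comm _ c, integral_const_mul, hr]

theorem not_dvd_of_ae_nonneg {n : ℕ} {r : ℝ[X]} (hr : 0 < r.natDegree)
    (hnonneg : ∀ᵐ x ∂μ, 0 ≤ r.eval x) : ¬ r ∣ p n := by
  rintro ⟨q, hpn⟩
  have hpn0 : p n ≠ 0 :=
    ne_zero_of_integral_eval_mul_self_eq_one ((horth n n).trans (if_pos rfl))
  have hq0 : q ≠ 0 := right_ne_zero_of_mul (hpn ▸ hpn0)
  have hqdeg : q.degree < n := by
    have := hdeg n
    rw [hpn, natDegree_mul (left_ne_zero_of_mul (hpn ▸ hpn0)) hq0] at this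
    exact (natDegree_lt_iff_degree_lt hq0).mp (by omega)
  have hzero : (fun x => (r * q ^ 2).eval x) =ᵐ[μ] 0 := by
    refine (integral_eq_zero_iff_of_nonneg_ae ?_
      (integrable_eval_of_integrable_abs_pow hmom _)).mp ?_
    · filter_upwards [hnonneg] with x hx using by simpa using mul_nonneg hx (sq_nonneg (q.eval x))
    · rw [← integral_eval_mul_eq_zero_of_degree_lt hmom hdeg horth hqdeg, hpn]
      congr 1 with x
      simp only [eval_mul, eval_pow]
      ring
  have : ∫ x, (p n).eval x * (p n).eval x ∂μ = 0 := by
    rw [← integral_zero ℝ ℝ]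
    refine integral_congr_ae ?_
    filter_upwards [hzero] with x hx
    simp only [hpn, eval_mul, eval_pow, Pi.zero_apply] at hx ⊢
    linear_combination r.eval x * hx
  simp [horth] at this

end Orthonormal

theorem stmt_19_general (μ : Measure ℝ)
    (hmom : ∀ n : ℕ, Integrable (fun x : ℝ => |x| ^ n) μ)
    (p : ℕ → Polynomial ℝ)
    (hdeg : ∀ k, (p k).natDegree = k)
    (horth : ∀ k m, ∫ x, (p k).eval x * (p m).eval x ∂μ = if k = m then 1 else 0)
    (n : ℕ) :
    (∀ a b : ℝ, Set.Ioo a b ∩ measSupport μ = ∅ →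
      {x ∈ Set.Ioo a b | (p n).eval x = 0}.Subsingleton) ∧
    (∀ b : ℝ, Set.Iio b ∩ measSupport μ = ∅ →
      ∀ x ∈ Set.Iio b, (p n).eval x ≠ 0) ∧
    (∀ a : ℝ, Set.Ioi a ∩ measSupport μ = ∅ →
      ∀ x ∈ Set.Ioi a, (p n).eval x ≠ 0) := by
  refine ⟨fun a b hgap => ?_, fun b hgap x hx hroot => ?_, fun a hgap x hx hroot => ?_⟩
  · intro x₁ hx₁ x₂ hx₂
    by_contra hne
    wlog hlt : x₁ < x₂ generalizing x₁ x₂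
    · exact this hx₂ hx₁ (Ne.symm hne) ((not_lt.mp hlt).lt_of_ne (Ne.symm hne))
    refine not_dvd_of_ae_nonneg hmom hdeg horth (r := (X - C x₁) * (X - C x₂)) ?_ ?_
      (X_sub_C_mul_X_sub_C_dvd hne hx₁.2 hx₂.2)
    · rw [natDegree_mul (X_sub_C_ne_zero x₁) (X_sub_C_ne_zero x₂)]
      simp
    · filter_upwards [ae_notMem_of_inter_measSupport_eq_empty hgap] with y hy
      simp only [Set.mem_Ioo, not_and_or, not_lt] at hy
      simp only [eval_mul, eval_sub, eval_X, eval_C]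
      rcases hy with hy | hy
      · nlinarith [hx₁.1.1, hx₂.1.1]
      · nlinarith [hx₁.1.2, hx₂.1.2]
  · refine not_dvd_of_ae_nonneg hmom hdeg horth (r := X - C x) (by simp) ?_
      (dvd_iff_isRoot.mpr hroot)
    filter_upwards [ae_notMem_of_inter_measSupport_eq_empty hgap] with y hy
    simp only [Set.mem_Iio, not_lt] at hy
    simpa using hx.out.le.trans hy
  · refine not_dvd_of_ae_nonneg hmom hdeg horth (r := -(X - C x))
      (by rw [natDegree_neg]; simp) ?_
      (dvd_iff_isRoot.mpr hroot).neg_left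
    filter_upwards [ae_notMem_of_inter_measSupport_eq_empty hgap] with y hy
    simp only [Set.mem_Ioi, not_lt] at hy
    simpa using hy.trans hx.out.le

/-- A gap of the support contains at most one zero of each `p_n`; an unbounded
interval disjoint from the support contains no zeros. -/
theorem stmt_19 (μ : Measure ℝ)
    (hmom : ∀ n : ℕ, Integrable (fun x : ℝ => |x| ^ n) μ)
    (hcpt : IsCompact (measSupport μ))
    (hinf : (measSupport μ).Infinite)
    (p : ℕ → Polynomial ℝ)
    (hdeg : ∀ k, (p k).natDegree = k)
    (hlead : ∀ k, 0 < (p k).leadingCoeff)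
    (horth : ∀ k m, ∫ x, (p k).eval x * (p m).eval x ∂μ = if k = m then 1 else 0)
    (n : ℕ) :
    (∀ a b : ℝ, Set.Ioo a b ∩ measSupport μ = ∅ →
      {x ∈ Set.Ioo a b | (p n).eval x = 0}.Subsingleton) ∧
    (∀ b : ℝ, Set.Iio b ∩ measSupport μ = ∅ →
      ∀ x ∈ Set.Iio b, (p n).eval x ≠ 0) ∧
    (∀ a : ℝ, Set.Ioi a ∩ measSupport μ = ∅ →
      ∀ x ∈ Set.Ioi a, (p n).eval x ≠ 0) :=
  stmt_19_general μ hmom p hdeg horth n
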